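/- Let (X,T,μ) be a system with exponential decay of correlations for α-Hölder continuous functions, with constants C, τ > 0. Then there is a constant C₂ > 0, depending only on C and τ, with the following property: for every m ≥ 3, every γ > 1, every ρ ∈ (0,1], and every α-Hölder continuous function f : X → [0,1] with α-Hölder norm ‖f‖ ≤ 2ρ^{−α}, the sum Z(x) = Σ_{k=0}^{m−1} f(T^k x) satisfies ∫ Z² dμ − (∫ Z dμ)² ≤ C₂ m ( μ(f) + ρ^{−2α} e^{−τ(log m)^γ} + (log m)^γ μ(f) ), where μ(f) = ∫ f dμ. -/

import Mathlib

/-!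
By invariance of `μ`, the variance of `Z` is `∑_{j,k<m} c(|j - k|)` for the autocovariance
`c(n) = μ(f ∘ Tⁿ · f) - μ(f)²`, and each `n < m` occurs as `|j - k|` at most `2m` times.
Since `0 ≤ f ≤ 1` we have `c(n) ≤ μ(f)`, which we use for the first `⌈(log m)^γ⌉` lags; beyond
that, decay of correlations gives `c(n) ≤ 4Cρ^{-2α} e^{-τn}`, whose tail is geometric.
-/

open MeasureTheory Filter

/-- The `α`-Hölder norm: `sup|f| + inf{K ≥ 0 : |f(x) - f(y)| ≤ K d(x,y)^α}`. -/
noncomputable def holderNorm {X : Type*} [MetricSpace X] (α : ℝ) (f : X → ℝ) : ℝ :=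
  (⨆ x, |f x|) + sInf {K : ℝ | 0 ≤ K ∧ ∀ x y, |f x - f y| ≤ K * dist x y ^ α}

open Finset

lemma holderNorm_nonneg {X : Type*} [MetricSpace X] (α : ℝ) (f : X → ℝ) :
    0 ≤ holderNorm α f :=
  add_nonneg (Real.iSup_nonneg fun _ => abs_nonneg _) (Real.sInf_nonneg fun _ hK => hK.1)

lemma continuous_of_abs_sub_le_mul_dist_rpow {X : Type*} [PseudoMetricSpace X] {f : X → ℝ}
    {α K : ℝ} (hα : 0 < α) (hf : ∀ x y, |f x - f y| ≤ K * dist x y ^ α) : Continuous f := by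
  refine continuous_iff_continuousAt.2 fun x => tendsto_iff_dist_tendsto_zero.2 ?_
  have hrpow : Tendsto (fun y => K * dist y x ^ α) (nhds x) (nhds (K * 0 ^ α)) :=
    ((continuous_id.dist continuous_const).rpow_const fun _ => Or.inr hα.le).tendsto' x _
      (by simp) |>.const_mul K
  rw [Real.zero_rpow hα.ne', mul_zero] at hrpow
  exact squeeze_zero (fun _ => dist_nonneg) (fun y => hf y x) hrpow

lemma sum_range_dist_le {b : ℕ → ℝ} (hb : ∀ n, 0 ≤ b n) {m j : ℕ} (hj : j < m) :
    ∑ k ∈ range m, b (Nat.dist j k) ≤ 2 * ∑ n ∈ range m, b n := by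
  classical
  have hfiber : ∀ n, #{k ∈ range m | Nat.dist j k = n} ≤ 2 := fun n =>
    (card_le_card (t := {j + n, j - n}) fun k hk => by
      rw [mem_filter, Nat.dist] at hk
      simp only [mem_insert, mem_singleton]
      omega).trans card_le_two
  have himage : (range m).image (Nat.dist j) ⊆ range m := fun n hn => by
    simp only [mem_image, mem_range, Nat.dist] at hn ⊢
    omega
  calc ∑ k ∈ range m, b (Nat.dist j k)
      = ∑ n ∈ (range m).image (Nat.dist j), #{k ∈ range m | Nat.dist j k = n} • b n :=
        sum_comp b _
    _ ≤ ∑ n ∈ (range m).image (Nat.dist j), 2 * b n := sum_le_sum fun n _ => by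
        rw [nsmul_eq_mul]
        exact mul_le_mul_of_nonneg_right (by exact_mod_cast hfiber n) (hb n)
    _ ≤ ∑ n ∈ range m, 2 * b n :=
        sum_le_sum_of_subset_of_nonneg himage fun n _ _ => mul_nonneg zero_le_two (hb n)
    _ = 2 * ∑ n ∈ range m, b n := (mul_sum _ _ _).symm

lemma sum_range_sum_range_dist_le {b : ℕ → ℝ} (hb : ∀ n, 0 ≤ b n) (m : ℕ) :
    ∑ j ∈ range m, ∑ k ∈ range m, b (Nat.dist j k) ≤ 2 * m * ∑ n ∈ range m, b n := by
  calc ∑ j ∈ range m, ∑ k ∈ range m, b (Nat.dist j k)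
      ≤ ∑ _j ∈ range m, 2 * ∑ n ∈ range m, b n :=
        sum_le_sum fun j hj => sum_range_dist_le hb (mem_range.1 hj)
    _ = 2 * m * ∑ n ∈ range m, b n := by rw [sum_const, card_range, nsmul_eq_mul]; ring

lemma sum_range_min_mul_pow_le {a D r : ℝ} (ha : 0 ≤ a) (hD : 0 ≤ D) (hr₀ : 0 ≤ r)
    (hr₁ : r < 1) (m N : ℕ) :
    ∑ n ∈ range m, min a (D * r ^ n) ≤ N * a + D * (r ^ N / (1 - r)) := by
  have hsub : range m ⊆ range N ∪ Ico N m := fun n hn => by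
    simp only [mem_union, mem_range, mem_Ico] at hn ⊢
    omega
  calc ∑ n ∈ range m, min a (D * r ^ n)
      ≤ ∑ n ∈ range N ∪ Ico N m, min a (D * r ^ n) :=
        sum_le_sum_of_subset_of_nonneg hsub fun n _ _ => le_min ha (by positivity)
    _ = ∑ n ∈ range N, min a (D * r ^ n) + ∑ n ∈ Ico N m, min a (D * r ^ n) :=
        sum_union (disjoint_left.2 fun n h₁ h₂ => by
          simp only [mem_range, mem_Ico] at h₁ h₂; omega)
    _ ≤ ∑ _n ∈ range N, a + ∑ n ∈ Ico N m, D * r ^ n :=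
        add_le_add (sum_le_sum fun _ _ => min_le_left _ _)
          (sum_le_sum fun _ _ => min_le_right _ _)
    _ ≤ N * a + D * (r ^ N / (1 - r)) := by
        rw [sum_const, card_range, nsmul_eq_mul, ← mul_sum]
        gcongr
        exact geom_sum_Ico_le_of_lt_one hr₀ hr₁

theorem MeasureTheory.MeasurePreserving.integral_comp_of_aestronglyMeasurable {α β E : Type*}
    [MeasurableSpace α] [MeasurableSpace β] [NormedAddCommGroup E] [NormedSpace ℝ E]
    {μ : Measure α} {ν : Measure β} {T : α → β} (hT : MeasurePreserving T μ ν) {g : β → E} (hg : AEStronglyMeasurable g ν) :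
    ∫ x, g (T x) ∂μ = ∫ y, g y ∂ν := by
  rw [← hT.map_eq] at hg ⊢
  exact (integral_map hT.aemeasurable hg).symm

section Autocovariance

variable {X : Type*} [MeasurableSpace X] {μ : Measure X} {T : X → X} {f : X → ℝ}

noncomputable def autocovariance (μ : Measure X) (T : X → X) (f : X → ℝ) (n : ℕ) : ℝ :=
  ∫ x, f (T^[n] x) * f x ∂μ - (∫ x, f x ∂μ) ^ 2

lemma integral_comp_iterate_mul_comp_iterate (hT : MeasurePreserving T μ μ)
    (hf : AEStronglyMeasurable f μ) (j k : ℕ) :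
    ∫ x, f (T^[j] x) * f (T^[k] x) ∂μ = ∫ x, f (T^[Nat.dist j k] x) * f x ∂μ := by
  wlog hkj : k ≤ j generalizing j k
  · simp_rw [mul_comm (f (T^[j] _)), Nat.dist_comm j k]
    exact this k j (le_of_not_ge hkj)
  have hg : AEStronglyMeasurable (fun y => f (T^[j - k] y) * f y) μ :=
    (hf.comp_measurePreserving (hT.iterate _)).mul hf
  rw [Nat.dist_eq_sub_of_le_right hkj, ← (hT.iterate k).integral_comp_of_aestronglyMeasurable hg]
  simp_rw [← Function.iterate_add_apply, Nat.sub_add_cancel hkj]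

lemma integral_birkhoffSum_sq_sub_sq [IsFiniteMeasure μ] (hT : MeasurePreserving T μ μ)
    (hf : MemLp f 2 μ) (m : ℕ) :
    ∫ x, birkhoffSum T f m x ^ 2 ∂μ - (∫ x, birkhoffSum T f m x ∂μ) ^ 2 =
      ∑ j ∈ range m, ∑ k ∈ range m, autocovariance μ T f (Nat.dist j k) := by
  have hLp : ∀ k, MemLp (fun x => f (T^[k] x)) 2 μ := fun k =>
    hf.comp_measurePreserving (hT.iterate k)
  have hint : ∀ k, ∫ x, f (T^[k] x) ∂μ = ∫ x, f x ∂μ := fun k =>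
    (hT.iterate k).integral_comp_of_aestronglyMeasurable hf.aestronglyMeasurable
  have hsum : ∫ x, birkhoffSum T f m x ∂μ = m * ∫ x, f x ∂μ := by
    simp only [birkhoffSum]
    rw [integral_finsetSum _ fun k _ => (hLp k).integrable one_le_two]
    simp [hint]
  have hsq : ∫ x, birkhoffSum T f m x ^ 2 ∂μ =
      ∑ j ∈ range m, ∑ k ∈ range m, ∫ x, f (T^[Nat.dist j k] x) * f x ∂μ := by
    simp only [birkhoffSum, sq, sum_mul_sum]
    have hprod : ∀ j k, Integrable (fun x => f (T^[j] x) * f (T^[k] x)) μ := fun j k =>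
      (hLp j).integrable_mul (hLp k)
    rw [integral_finsetSum _ fun j _ => integrable_finsetSum _ fun k _ => hprod j k]
    refine sum_congr rfl fun j _ => ?_
    rw [integral_finsetSum _ fun k _ => hprod j k]
    exact sum_congr rfl fun k _ =>
      integral_comp_iterate_mul_comp_iterate hT hf.aestronglyMeasurable j k
  simp only [hsum, hsq, autocovariance, sum_sub_distrib, sum_const, card_range, nsmul_eq_mul]
  ring

lemma autocovariance_le_integral [IsFiniteMeasure μ] (hT : MeasurePreserving T μ μ)
    (hfm : AEStronglyMeasurable f μ) (hf : ∀ x, f x ∈ Set.Icc (0 : ℝ) 1) (n : ℕ) :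
    autocovariance μ T f n ≤ ∫ x, f x ∂μ := by
  have hfn : Integrable (fun x => f (T^[n] x)) μ :=
    .of_bound (hfm.comp_measurePreserving (hT.iterate n)) 1
      (ae_of_all _ fun x => by simp [abs_of_nonneg (hf _).1, (hf _).2])
  have hle : ∫ x, f (T^[n] x) * f x ∂μ ≤ ∫ x, f x ∂μ := by
    rw [← (hT.iterate n).integral_comp_of_aestronglyMeasurable hfm]
    exact integral_mono_of_nonneg (ae_of_all _ fun x => mul_nonneg (hf _).1 (hf _).1) hfn
      (ae_of_all _ fun x => mul_le_of_le_one_right (hf _).1 (hf _).2)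
  unfold autocovariance
  nlinarith [sq_nonneg (∫ x, f x ∂μ)]

lemma autocovariance_le_of_holderNorm_le {α C τ B : ℝ} [MetricSpace X] (hC : 0 ≤ C)
    (hfB : holderNorm α f ≤ B) {n : ℕ}
    (hdecay : |∫ x, f (T^[n] x) * f x ∂μ - (∫ x, f x ∂μ) * ∫ x, f x ∂μ| ≤
      C * Real.exp (-τ * n) * holderNorm α f * holderNorm α f) :
    autocovariance μ T f n ≤ C * B ^ 2 * Real.exp (-τ) ^ n := by
  have hf₀ := holderNorm_nonneg α f
  have hB : 0 ≤ B := hf₀.trans hfB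
  calc autocovariance μ T f n
      ≤ C * Real.exp (-τ * n) * holderNorm α f * holderNorm α f := by
        rw [autocovariance, sq]; exact (le_abs_self _).trans hdecay
    _ ≤ C * Real.exp (-τ * n) * B * B := by gcongr
    _ = C * B ^ 2 * Real.exp (-τ) ^ n := by rw [← Real.exp_nat_mul]; ring_nf

lemma integral_birkhoffSum_sq_sub_sq_le [IsFiniteMeasure μ] (hT : MeasurePreserving T μ μ)
    (hf : MemLp f 2 μ) {a D r : ℝ} (ha : 0 ≤ a) (hD : 0 ≤ D) (hr₀ : 0 ≤ r) (hr₁ : r < 1)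
    (hcov : ∀ n, autocovariance μ T f n ≤ min a (D * r ^ n)) (m N : ℕ) :
    ∫ x, birkhoffSum T f m x ^ 2 ∂μ - (∫ x, birkhoffSum T f m x ∂μ) ^ 2 ≤
      2 * m * (N * a + D * (r ^ N / (1 - r))) := by
  rw [integral_birkhoffSum_sq_sub_sq hT hf]
  calc ∑ j ∈ range m, ∑ k ∈ range m, autocovariance μ T f (Nat.dist j k)
      ≤ ∑ j ∈ range m, ∑ k ∈ range m, min a (D * r ^ Nat.dist j k) :=
        sum_le_sum fun _ _ => sum_le_sum fun _ _ => hcov _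
    _ ≤ 2 * m * ∑ n ∈ range m, min a (D * r ^ n) :=
        sum_range_sum_range_dist_le (b := fun n => min a (D * r ^ n))
          (fun _ => le_min ha (by positivity)) m
    _ ≤ 2 * m * (N * a + D * (r ^ N / (1 - r))) := by
        gcongr; exact sum_range_min_mul_pow_le ha hD hr₀ hr₁ m N

end Autocovariance

lemma two_mul_ceil_add_exp_tail_le {a L C τ P : ℝ} (ha : 0 ≤ a) (hL : 0 ≤ L) (hC : 0 ≤ C)
    (hτ : 0 < τ) (hP : 0 ≤ P) (m : ℕ) :
    2 * m * (⌈L⌉₊ * a + C * (4 * P) * (Real.exp (-τ) ^ ⌈L⌉₊ / (1 - Real.exp (-τ)))) ≤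
      (2 + 8 * C / (1 - Real.exp (-τ))) * m * (a + P * Real.exp (-τ * L) + L * a) := by
  have hr : 0 < 1 - Real.exp (-τ) := sub_pos.2 (Real.exp_lt_one_iff.2 (neg_neg_of_pos hτ))
  have hceil : (⌈L⌉₊ : ℝ) ≤ L + 1 := (Nat.ceil_lt_add_one hL).le
  have htail : Real.exp (-τ) ^ ⌈L⌉₊ ≤ Real.exp (-τ * L) := by
    rw [← Real.exp_nat_mul]
    exact Real.exp_le_exp.2 (by nlinarith [Nat.le_ceil L])
  have ha' : 0 ≤ 8 * C / (1 - Real.exp (-τ)) * (m * (a + L * a)) := by positivity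
  have hP' : 0 ≤ m * (P * Real.exp (-τ * L)) := by positivity
  calc 2 * m * (⌈L⌉₊ * a + C * (4 * P) * (Real.exp (-τ) ^ ⌈L⌉₊ / (1 - Real.exp (-τ))))
      ≤ 2 * m * ((L + 1) * a + C * (4 * P) * (Real.exp (-τ * L) / (1 - Real.exp (-τ)))) := by
        gcongr
    _ ≤ _ := by linear_combination ha' + 2 * hP'

/-- The variance estimate for Birkhoff-type sums of Hölder functions: there is `C₂ > 0`
(depending only on `C` and `τ`) such that for every `m ≥ 3`, `γ > 1`, `ρ ∈ (0,1]` and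
every `α`-Hölder `f : X → [0,1]` with `‖f‖_α ≤ 2ρ^{-α}`, the sum `Z = ∑_{k<m} f ∘ T^k`
satisfies `∫ Z² - (∫ Z)² ≤ C₂ m (μ(f) + ρ^{-2α} e^{-τ (log m)^γ} + (log m)^γ μ(f))`. -/
theorem stmt10 {X : Type*} [MetricSpace X] [MeasurableSpace X] [BorelSpace X]
    (μ : Measure X) [IsProbabilityMeasure μ] (T : X → X)
    (hT : MeasurePreserving T μ μ)
    (α : ℝ) (hα : α ∈ Set.Ioc (0 : ℝ) 1)
    (C τ : ℝ) (hC : 0 < C) (hτ : 0 < τ)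
    (hdec : ∀ (n : ℕ) (f g : X → ℝ),
      (∃ M, ∀ x, |f x| ≤ M) → (∃ K ≥ 0, ∀ x y, |f x - f y| ≤ K * dist x y ^ α) →
      (∃ M, ∀ x, |g x| ≤ M) → (∃ K ≥ 0, ∀ x y, |g x - g y| ≤ K * dist x y ^ α) →
      |(∫ x, f (T^[n] x) * g x ∂μ) - (∫ x, f x ∂μ) * ∫ x, g x ∂μ| ≤
        C * Real.exp (-τ * n) * holderNorm α f * holderNorm α g) :
    ∃ C₂ > 0, ∀ m : ℕ, 3 ≤ m → ∀ γ : ℝ, 1 < γ → ∀ ρ : ℝ, ρ ∈ Set.Ioc (0 : ℝ) 1 →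
      ∀ f : X → ℝ, (∀ x, f x ∈ Set.Icc (0 : ℝ) 1) →
      (∃ K ≥ 0, ∀ x y, |f x - f y| ≤ K * dist x y ^ α) →
      holderNorm α f ≤ 2 * ρ ^ (-α) →
      ∫ x, (∑ k ∈ Finset.range m, f (T^[k] x)) ^ 2 ∂μ -
          (∫ x, ∑ k ∈ Finset.range m, f (T^[k] x) ∂μ) ^ 2 ≤
        C₂ * m * ((∫ x, f x ∂μ) + ρ ^ (-(2 * α)) * Real.exp (-τ * Real.log m ^ γ) +
          Real.log m ^ γ * ∫ x, f x ∂μ) := by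
  have hr₁ : Real.exp (-τ) < 1 := Real.exp_lt_one_iff.2 (neg_neg_of_pos hτ)
  refine ⟨2 + 8 * C / (1 - Real.exp (-τ)), by have := sub_pos.2 hr₁; positivity, ?_⟩
  rintro m - γ - ρ ⟨hρ, -⟩ f hf hfH hfB
  have hfm : Measurable f :=
    (continuous_of_abs_sub_le_mul_dist_rpow hα.1 hfH.choose_spec.2).measurable
  have hbdd : ∀ x, |f x| ≤ 1 := fun x => abs_le.2 ⟨by linarith [(hf x).1], (hf x).2⟩
  have hI : 0 ≤ ∫ x, f x ∂μ := integral_nonneg fun x => (hf x).1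
  have hcov : ∀ n, autocovariance μ T f n ≤
      min (∫ x, f x ∂μ) (C * (2 * ρ ^ (-α)) ^ 2 * Real.exp (-τ) ^ n) := fun n =>
    le_min (autocovariance_le_integral hT hfm.aestronglyMeasurable hf n)
      (autocovariance_le_of_holderNorm_le hC.le hfB
        (hdec n f f ⟨1, hbdd⟩ hfH ⟨1, hbdd⟩ hfH))
  have hρα : (2 * ρ ^ (-α)) ^ 2 = 4 * ρ ^ (-(2 * α)) := by
    rw [mul_pow, ← Real.rpow_mul_natCast hρ.le]
    ring_nf
  have hL : 0 ≤ Real.log m ^ γ := Real.rpow_nonneg (Real.log_natCast_nonneg m) γ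
  refine (integral_birkhoffSum_sq_sub_sq_le hT
    (.of_bound hfm.aestronglyMeasurable 1 (ae_of_all _ hbdd)) hI (by positivity)
    (Real.exp_nonneg _) hr₁ hcov m ⌈Real.log m ^ γ⌉₊).trans ?_
  rw [hρα]
  exact two_mul_ceil_add_exp_tail_le hI hL hC.le hτ (by positivity) m
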